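/- Let k ≥ 1 and n = 2k+1, and let W_{01}^k be the spanning subgraph of the middle-levels graph M_k whose edges are exactly the edges {S, S ∪ {x}} of lexical color 0 or 1 (i.e., c(x, S) ∈ {0, 1}). Then every vertex of M_k has degree exactly 2 in W_{01}^k; hence W_{01}^k is a 2-factor of M_k, i.e., a disjoint union of cycles covering all vertices of M_k. -/

import Mathlib

/-- Vertices of the middle-levels graph: the `k`- and `(k+1)`-element subsets of
`ZMod (2k+1)`. -/
abbrev Vert (k : ℕ) := {A : Finset (ZMod (2 * k + 1)) // A.card = k ∨ A.card = k + 1}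

/-- The middle-levels graph `M_k`: `A` is adjacent to `A′` iff one strictly contains
the other. -/
def middleLevels (k : ℕ) : SimpleGraph (Vert k) where
  Adj A B := A.1 ⊂ B.1 ∨ B.1 ⊂ A.1
  symm := ⟨fun _ _ h => h.symm⟩
  loopless := ⟨fun _ h => h.elim (fun h' => ssubset_irrefl _ h') (fun h' => ssubset_irrefl _ h')⟩

/-- The cyclic interval `[y, x) = {y, y+1, …, x−1}` in `Z_n` (empty if `y = x`). -/
def cycInterval (n : ℕ) [NeZero n] (y x : ZMod n) : Finset (ZMod n) :=
  Finset.univ.filter (fun z => (z - y).val < (x - y).val)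

/-- The lexical color of `x ∉ S` relative to `S`:
`c(x,S) = |{ y ∈ (Z_n \ S) \ {x} : |[y,x) ∩ S| < |[y,x) ∩ (Z_n \ S)| }|`. -/
def lexColor (n : ℕ) [NeZero n] (S : Finset (ZMod n)) (x : ZMod n) : ℕ :=
  ((Sᶜ.erase x).filter
    (fun y => (cycInterval n y x ∩ S).card < (cycInterval n y x ∩ Sᶜ).card)).card

/-- The lexical color of the edge `{S, S ∪ {x}}`, expressed symmetrically: for an
edge `A ⊂ B` of `M_k`, the difference `B \ A` is a singleton `{x}` (so its sum is
`x`) and the color is `c(x, A)`. -/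
def edgeColor (n : ℕ) [NeZero n] (A B : Finset (ZMod n)) : ℕ :=
  if A ⊆ B then lexColor n A ((B \ A).sum id) else lexColor n B ((A \ B).sum id)

/-!
Write `s_P(y, x) = |[y, x) ∩ P| - |[y, x) \ P|`. If `2|P| = n + 1`, then `s_P(y, x) + s_P(x, y) = 1`
for `x ≠ y` and `s_P` is additive along cyclically ordered triples, so `0 < s_P(y, x)` is a strict
total order on `Z_n`. For a `k`-set `S`, `c(x, S)` is the rank of `x` in `Sᶜ` for the order of
`P = Sᶜ`, so the upward edges at `S` carry each colour `0, …, k` exactly once. For a `(k+1)`-set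
`B` and `x ∈ B`, telescoping `max (s_{Bᶜ}(z, x)) 0` once around the cycle shows that
`c(x, B \ {x})` counts the `y ∈ B` above `x` in the order of `P = B`; this is again a rank, so
the downward edges at `B` also carry each colour exactly once.
-/

open Finset

namespace MiddleLevels

section Rank

variable {α : Type*} (r : α → α → Prop) [IsStrictTotalOrder α r] [DecidableRel r]
  (Q : Finset α)

def rank (x : α) : ℕ := #{y ∈ Q | r y x}

lemma rank_lt_rank {x y : α} (hx : x ∈ Q) (hxy : r x y) : rank r Q x < rank r Q y := by
  refine card_lt_card ((ssubset_iff_of_subset fun z hz => ?_).2 ⟨x, ?_, ?_⟩)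
  · rw [mem_filter] at hz ⊢
    exact ⟨hz.1, _root_.trans hz.2 hxy⟩
  · exact mem_filter.2 ⟨hx, hxy⟩
  · simp [irrefl]

lemma rank_lt_card {x : α} (hx : x ∈ Q) : rank r Q x < #Q :=
  card_lt_card ((ssubset_iff_of_subset (filter_subset _ _)).2 ⟨x, hx, by simp [irrefl]⟩)

lemma injOn_rank : Set.InjOn (rank r Q) Q := by
  intro x hx y hy hxy
  rcases trichotomous_of r x y with h | h | h
  · exact absurd hxy (rank_lt_rank r Q hx h).ne
  · exact h
  · exact absurd hxy (rank_lt_rank r Q hy h).ne'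

lemma image_rank : Q.image (rank r Q) = range #Q := by
  refine eq_of_subset_of_card_le (fun j hj => ?_) ?_
  · obtain ⟨x, hx, rfl⟩ := mem_image.1 hj
    exact mem_range.2 (rank_lt_card r Q hx)
  · rw [card_range, card_image_of_injOn (injOn_rank r Q)]

lemma card_filter_rank (p : ℕ → Prop) [DecidablePred p] :
    #{x ∈ Q | p (rank r Q x)} = #{j ∈ range #Q | p j} := by
  rw [← image_rank r Q, filter_image,
    card_image_of_injOn ((injOn_rank r Q).mono (filter_subset _ _))]

end Rank

lemma natCard_subtype_eq_card {α β : Type*} {c : β → Prop} {Q : Subtype c → Prop}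
    (T : Finset α) (f : α → β) (hf : Set.InjOn f T) (hc : ∀ x ∈ T, c (f x))
    (hQ : ∀ w, Q w ↔ ∃ x ∈ T, f x = w.1) : Nat.card (Subtype Q) = #T := by
  have e : Subtype Q ≃ f '' T :=
    (Equiv.subtypeEquivRight fun w => (hQ w).trans (by simp only [Set.mem_image, mem_coe])).trans
      (Equiv.subtypeSubtypeEquivSubtype (p := c) (q := (· ∈ f '' T)) <| by
        rintro _ ⟨x, hx, rfl⟩; exact hc x hx)
  rw [Nat.card_congr e, Nat.card_coe_set_eq, hf.ncard_image, Set.ncard_coe_finset]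

section CycInterval

variable {n : ℕ} [NeZero n]

lemma val_sub_eq_ite (p q : ZMod n) :
    (p - q).val = if q.val ≤ p.val then p.val - q.val else p.val + n - q.val := by
  split_ifs with h
  · exact ZMod.val_sub h
  · have hqp : (q - p).val = q.val - p.val := ZMod.val_sub (by omega)
    have hne : q - p ≠ 0 := by
      rw [← ZMod.val_ne_zero, hqp]; omega
    rw [← neg_sub, ZMod.neg_val, if_neg hne, hqp]
    have := ZMod.val_lt q
    omega

lemma val_sub_eq_ite_of_base (u a b : ZMod n) :
    (u - b).val = if (b - a).val ≤ (u - a).val then (u - a).val - (b - a).val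
      else (u - a).val + n - (b - a).val := by
  rw [← val_sub_eq_ite, sub_sub_sub_cancel_right]

lemma mem_cycInterval {y x z : ZMod n} : z ∈ cycInterval n y x ↔ (z - y).val < (x - y).val := by
  simp [cycInterval]

@[simp]
lemma cycInterval_self (x : ZMod n) : cycInterval n x x = ∅ := by
  ext z; simp [mem_cycInterval]

lemma notMem_cycInterval_right (y x : ZMod n) : x ∉ cycInterval n y x := by
  simp [mem_cycInterval]

lemma cycInterval_swap {x y : ZMod n} (h : x ≠ y) :
    cycInterval n x y = (cycInterval n y x)ᶜ := by
  have hxy : (x - y).val ≠ 0 := by rwa [ZMod.val_ne_zero, sub_ne_zero]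
  ext z
  simp only [mem_compl, mem_cycInterval, not_lt]
  rw [val_sub_eq_ite_of_base z y x, val_sub_eq_ite_of_base y y x, sub_self, ZMod.val_zero]
  have := ZMod.val_lt (z - y)
  have := ZMod.val_lt (x - y)
  split_ifs <;> omega

lemma cycInterval_union {a b c : ZMod n} (h : (b - a).val ≤ (c - a).val) :
    cycInterval n a b ∪ cycInterval n b c = cycInterval n a c := by
  ext z
  simp only [mem_union, mem_cycInterval]
  rw [val_sub_eq_ite_of_base z a b, val_sub_eq_ite_of_base c a b]
  have := ZMod.val_lt (z - a)
  have := ZMod.val_lt (c - a)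
  split_ifs <;> omega

lemma disjoint_cycInterval {a b c : ZMod n} (h : (b - a).val ≤ (c - a).val) :
    Disjoint (cycInterval n a b) (cycInterval n b c) := by
  rw [disjoint_left]
  intro z
  simp only [mem_cycInterval]
  rw [val_sub_eq_ite_of_base z a b, val_sub_eq_ite_of_base c a b]
  have := ZMod.val_lt (c - a)
  split_ifs <;> omega

lemma cycInterval_add_one (hn : 1 < n) (x : ZMod n) : cycInterval n x (x + 1) = {x} := by
  have : Fact (1 < n) := ⟨hn⟩
  ext z
  rw [mem_cycInterval, add_sub_cancel_left, ZMod.val_one, mem_singleton, Nat.lt_one_iff,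
    ZMod.val_eq_zero, sub_eq_zero]

end CycInterval

section Surplus

variable {n : ℕ} [NeZero n]

/-- `|[y, x) ∩ P| - |[y, x) \ P|`: the height reached at `x` by the lattice path that starts at
`y` and steps up on elements of `P`, down on the others. -/
def surplus (P : Finset (ZMod n)) (y x : ZMod n) : ℤ :=
  #(cycInterval n y x ∩ P) - #(cycInterval n y x ∩ Pᶜ)

lemma surplus_pos_iff {P : Finset (ZMod n)} {y x : ZMod n} :
    0 < surplus P y x ↔ #(cycInterval n y x ∩ Pᶜ) < #(cycInterval n y x ∩ P) := by
  rw [surplus, sub_pos, Nat.cast_lt]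

@[simp]
lemma surplus_self (P : Finset (ZMod n)) (x : ZMod n) : surplus P x x = 0 := by
  simp [surplus]

@[simp]
lemma surplus_compl (P : Finset (ZMod n)) (y x : ZMod n) : surplus Pᶜ y x = -surplus P y x := by
  simp [surplus]

lemma surplus_add {a b c : ZMod n} (h : (b - a).val ≤ (c - a).val) (P : Finset (ZMod n)) :
    surplus P a b + surplus P b c = surplus P a c := by
  have hcard (Q : Finset (ZMod n)) : #(cycInterval n a c ∩ Q)
      = #(cycInterval n a b ∩ Q) + #(cycInterval n b c ∩ Q) := by
    rw [← cycInterval_union h, union_inter_distrib_right,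
      card_union_of_disjoint ((disjoint_cycInterval h).mono inter_subset_left inter_subset_left)]
  simp only [surplus, hcard]
  push_cast
  ring

lemma surplus_add_surplus_swap (P : Finset (ZMod n)) {x y : ZMod n} (h : x ≠ y) :
    surplus P y x + surplus P x y = 2 * #P - n := by
  have hsplit (Q : Finset (ZMod n)) :
      #(cycInterval n y x ∩ Q) + #((cycInterval n y x)ᶜ ∩ Q) = #Q := by
    rw [inter_comm, inter_comm _ Q, ← sdiff_eq_inter_compl, card_inter_add_card_sdiff]
  have hP := hsplit P
  have hPc := hsplit Pᶜ
  rw [card_compl, ZMod.card] at hPc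
  have := card_le_univ P
  rw [ZMod.card] at this
  rw [surplus, surplus, cycInterval_swap h]
  omega

lemma surplus_add_one (hn : 1 < n) (P : Finset (ZMod n)) (z : ZMod n) :
    surplus P z (z + 1) = if z ∈ P then 1 else -1 := by
  split_ifs with h <;> simp [surplus, cycInterval_add_one hn, h]

lemma surplus_insert_right (P : Finset (ZMod n)) (y x : ZMod n) :
    surplus (insert x P) y x = surplus P y x := by
  have hx := notMem_cycInterval_right y x
  rw [surplus, surplus, inter_insert_of_notMem hx, compl_insert, inter_erase,
    erase_eq_of_notMem (fun h => hx (mem_inter.1 h).1)]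

lemma isStrictTotalOrder_surplus_pos {P : Finset (ZMod n)}
    (hP : 2 * #P = n + 1) : IsStrictTotalOrder (ZMod n) (fun y x => 0 < surplus P y x) where
  trichotomous a b hab hba := by
    by_contra h
    have := surplus_add_surplus_swap P h
    omega
  irrefl a := by simp
  trans a b c hab hbc := by
    obtain rfl | hbc' := eq_or_ne b c
    · simp at hbc
    have hswap := surplus_add_surplus_swap P hbc'
    rcases le_total (b - a).val (c - a).val with h | h
    · have := surplus_add h P
      omega
    · have := surplus_add h P
      omega

lemma card_filter_surplus_pos (hn : 1 < n) {P : Finset (ZMod n)}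
    (hP : 2 * #P + 1 = n) {x : ZMod n} (hx : x ∉ P) :
    #{y ∈ P | 0 < surplus P y x} = #{y ∈ Pᶜ.erase x | 0 ≤ surplus P y x} := by
  have : Fact (1 < n) := ⟨hn⟩
  set F : ZMod n → ℤ := fun z => max (surplus P z x) 0
  have hstep (z : ZMod n) : F z - F (z + 1) =
      (if z ∈ {y ∈ P | 0 < surplus P y x} then 1 else 0)
        - (if z ∈ {y ∈ Pᶜ.erase x | 0 ≤ surplus P y x} then 1 else 0) := by
    obtain rfl | hzx := eq_or_ne z x
    · have hx0 : surplus P (z + 1) z = 0 := by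
        have := surplus_add_surplus_swap P (succ_ne_self z)
        rw [surplus_add_one hn, if_neg hx] at this
        omega
      simp [F, hx, hx0]
    · have h1 : ((z + 1) - z).val ≤ (x - z).val := by
        rw [add_sub_cancel_left, ZMod.val_one, Nat.one_le_iff_ne_zero, ZMod.val_ne_zero,
          sub_ne_zero]
        exact hzx.symm
      have hsplit := surplus_add h1 P
      rw [surplus_add_one hn] at hsplit
      grind [mem_compl]
  have hsum : ∑ z, (F z - F (z + 1)) = 0 := by
    rw [sum_sub_distrib, sub_eq_zero]
    exact (Fintype.sum_equiv (Equiv.addRight 1) (fun z => F (z + 1)) F fun _ => rfl).symm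
  simp only [hstep, sum_sub_distrib, sum_boole, filter_univ_mem] at hsum
  omega

end Surplus

section LexColor

variable {n : ℕ} [NeZero n]

lemma lexColor_eq_rank (S : Finset (ZMod n)) (x : ZMod n) :
    lexColor n S x = rank (fun y x => 0 < surplus Sᶜ y x) Sᶜ x := by
  rw [lexColor, rank, filter_erase, erase_eq_of_notMem (by simp)]
  congr 1
  refine filter_congr fun y _ => ?_
  rw [surplus_pos_iff, compl_compl]

lemma lexColor_erase_eq_rank (hn : 1 < n) {B : Finset (ZMod n)} (hB : 2 * #B = n + 1)
    {x : ZMod n} (hx : x ∈ B) :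
    lexColor n (B.erase x) x = rank (Function.swap fun y x => 0 < surplus B y x) B x := by
  have hBc : 2 * #Bᶜ + 1 = n := by
    have := card_le_univ B
    rw [card_compl, ZMod.card] at *
    omega
  rw [lexColor_eq_rank, rank, compl_erase, filter_insert, if_neg (by simp)]
  simp only [surplus_insert_right]
  rw [card_filter_surplus_pos hn hBc (notMem_compl.2 hx), compl_compl]
  have hx' : x ∉ {y ∈ B | Function.swap (fun y x => 0 < surplus B y x) y x} := by simp
  rw [rank, ← erase_eq_of_notMem hx', ← filter_erase]
  refine congrArg card (filter_congr fun y hy => ?_)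
  have := surplus_add_surplus_swap B (ne_of_mem_erase hy).symm
  simp only [surplus_compl, Function.swap]
  omega

lemma card_filter_lexColor {S : Finset (ZMod n)} (hS : 2 * #S + 1 = n) (p : ℕ → Prop)
    [DecidablePred p] : #{x ∈ Sᶜ | p (lexColor n S x)} = #{j ∈ range (#S + 1) | p j} := by
  have hSc : #Sᶜ = #S + 1 := by
    rw [card_compl, ZMod.card]; omega
  have := isStrictTotalOrder_surplus_pos (P := Sᶜ) (by omega)
  simp only [lexColor_eq_rank]
  rw [card_filter_rank, hSc]

lemma card_filter_lexColor_erase (hn : 1 < n) {B : Finset (ZMod n)} (hB : 2 * #B = n + 1)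
    (p : ℕ → Prop) [DecidablePred p] :
    #{x ∈ B | p (lexColor n (B.erase x) x)} = #{j ∈ range #B | p j} := by
  have := isStrictTotalOrder_surplus_pos hB
  rw [filter_congr fun x hx => by rw [lexColor_erase_eq_rank hn hB hx], card_filter_rank]

end LexColor

section Graph

variable {k : ℕ} {A : Finset (ZMod (2 * k + 1))}

lemma middleLevels_adj_iff_of_card_eq (hA : #A = k) (w : Vert k) :
    (middleLevels k).Adj ⟨A, Or.inl hA⟩ w ↔ ∃ x ∉ A, insert x A = w.1 := by
  change A ⊂ w.1 ∨ w.1 ⊂ A ↔ _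
  rw [← covBy_iff_exists_insert]
  refine ⟨fun h => ?_, fun h => Or.inl h.lt⟩
  rcases h with h | h <;> have := card_lt_card h
  · rw [covBy_iff_card_sdiff_eq_one, card_sdiff_of_subset h.subset]
    rcases w.2 with h' | h' <;> exact ⟨h.subset, by omega⟩
  · rcases w.2 with h' | h' <;> omega

lemma middleLevels_adj_iff_of_card_eq_add_one (hA : #A = k + 1) (w : Vert k) :
    (middleLevels k).Adj ⟨A, Or.inr hA⟩ w ↔ ∃ x ∈ A, A.erase x = w.1 := by
  change A ⊂ w.1 ∨ w.1 ⊂ A ↔ _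
  rw [← covBy_iff_exists_erase]
  refine ⟨fun h => ?_, fun h => Or.inr h.lt⟩
  rcases h with h | h <;> have := card_lt_card h
  · rcases w.2 with h' | h' <;> omega
  · rw [covBy_iff_card_sdiff_eq_one, card_sdiff_of_subset h.subset]
    rcases w.2 with h' | h' <;> exact ⟨h.subset, by omega⟩

lemma edgeColor_insert {n : ℕ} [NeZero n] {S : Finset (ZMod n)} {x : ZMod n} (hx : x ∉ S) :
    edgeColor n S (insert x S) = lexColor n S x := by
  rw [edgeColor, if_pos (subset_insert x S), insert_sdiff_cancel hx, sum_singleton, id]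

lemma edgeColor_erase {n : ℕ} [NeZero n] {S : Finset (ZMod n)} {x : ZMod n} (hx : x ∈ S) :
    edgeColor n S (S.erase x) = lexColor n (S.erase x) x := by
  rw [edgeColor, if_neg fun h => notMem_erase x S (h hx), sdiff_erase_self hx, sum_singleton, id]

lemma natCard_colorNeighbors_of_card_eq (hA : #A = k) (p : ℕ → Prop) [DecidablePred p] :
    Nat.card {w : Vert k // (middleLevels k).Adj ⟨A, Or.inl hA⟩ w ∧
      p (edgeColor (2 * k + 1) A w.1)} = #{x ∈ Aᶜ | p (lexColor (2 * k + 1) A x)} := by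
  refine natCard_subtype_eq_card _ (insert · A) ((insert_inj_on' A).mono (filter_subset _ _)) ?_
    fun w => ?_
  · intro x hx
    right
    rw [card_insert_of_notMem (mem_compl.1 (mem_filter.1 hx).1), hA]
  · simp only [middleLevels_adj_iff_of_card_eq hA, mem_filter, mem_compl]
    constructor
    · rintro ⟨⟨x, hx, hw⟩, hp⟩
      rw [← hw, edgeColor_insert hx] at hp
      exact ⟨x, ⟨hx, hp⟩, hw⟩
    · rintro ⟨x, ⟨hx, hp⟩, hw⟩
      refine ⟨⟨x, hx, hw⟩, ?_⟩
      rwa [← hw, edgeColor_insert hx]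

lemma natCard_colorNeighbors_of_card_eq_add_one (hA : #A = k + 1) (p : ℕ → Prop)
    [DecidablePred p] :
    Nat.card {w : Vert k // (middleLevels k).Adj ⟨A, Or.inr hA⟩ w ∧
      p (edgeColor (2 * k + 1) A w.1)} = #{x ∈ A | p (lexColor (2 * k + 1) (A.erase x) x)} := by
  refine natCard_subtype_eq_card _ A.erase ((erase_injOn A).mono (filter_subset _ _)) ?_
    fun w => ?_
  · intro x hx
    left
    rw [card_erase_of_mem (mem_filter.1 hx).1, hA, Nat.add_sub_cancel]
  · simp only [middleLevels_adj_iff_of_card_eq_add_one hA, mem_filter]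
    constructor
    · rintro ⟨⟨x, hx, hw⟩, hp⟩
      rw [← hw, edgeColor_erase hx] at hp
      exact ⟨x, ⟨hx, hp⟩, hw⟩
    · rintro ⟨x, ⟨hx, hp⟩, hw⟩
      refine ⟨⟨x, hx, hw⟩, ?_⟩
      rwa [← hw, edgeColor_erase hx]

end Graph

end MiddleLevels

open MiddleLevels

/-- The union `W_{01}^k` of the lexical 1-factors of colors 0 and 1 is a 2-factor of
`M_k`: every vertex has exactly two neighbors along edges of color 0 or 1. -/
theorem stmt14 (k : ℕ) (hk : 1 ≤ k) (v : Vert k) :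
    Nat.card {w : Vert k // (middleLevels k).Adj v w ∧
      (edgeColor (2 * k + 1) v.1 w.1 = 0 ∨ edgeColor (2 * k + 1) v.1 w.1 = 1)} = 2 := by
  have hpair (m : ℕ) (hm : 2 ≤ m) : #{j ∈ range m | j = 0 ∨ j = 1} = 2 := by
    rw [← card_range 2]
    congr 1
    ext j
    simp only [mem_filter, mem_range]
    omega
  obtain ⟨A, hA | hA⟩ := v
  · rw [natCard_colorNeighbors_of_card_eq hA (fun c => c = 0 ∨ c = 1),
      card_filter_lexColor (p := fun c => c = 0 ∨ c = 1) (by omega), hpair _ (by omega)]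
  · rw [natCard_colorNeighbors_of_card_eq_add_one hA (fun c => c = 0 ∨ c = 1),
      card_filter_lexColor_erase (p := fun c => c = 0 ∨ c = 1) (by omega) (by omega), hA,
      hpair _ (by omega)]
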